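/- For every integer n ≥ 3, the sum of the blocks in the first block row of the matrix M_n equals the compacted matrix of rank n, i.e. Σ_{k=1}^{2n} M_{1k} = C_n. Equivalently, with k = 2n−1: T_k + J_k·T_k·J_k + U^n_k + (n−2)·(U^{n−1}_k + U^{n+1}_k) = C_n. -/

import Mathlib

/-- `t` lies in the cyclic interval from `a` to `b` in `ℤ/m` (indices reduced mod `m`). -/
def inCyc (m t a b : ℕ) : Prop :=
  (t + m - a % m) % m ≤ (b % m + m - a % m) % m

instance (m t a b : ℕ) : Decidable (inCyc m t a b) := by
  unfold inCyc; infer_instance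

/-- The defining condition for the entries of the Markov matrix `M_n`:
`Mcond n l t i j` holds iff `m^{(l+1)(t+1)}_{(i+1)(j+1)} = 1`, where `l, t` range
over `{0, …, 2n-1}` and `i, j` over `{0, …, 2n-2}` (zero-indexed versions of the
one-indexed block indices `{1, …, 2n}` and entry indices `{1, …, 2n-1}`). -/
def Mcond (n l t i j : ℕ) : Prop :=
  (i + 1 ≤ n - 3 ∧ j = i + 1 ∧ t = (l + n + 1) % (2 * n)) ∨
  (i = n - 3 ∧ (j = n - 2 ∨ j = n - 1) ∧ t = (l + n + 1) % (2 * n)) ∨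
  (i = n - 2 ∧ ((n ≤ j ∧ t = (l + n + 1) % (2 * n)) ∨
      inCyc (2 * n) t (l + n + 2) (l + 2 * n - 1))) ∨
  (i = n - 1 ∧ t = l) ∨
  (i = n ∧ ((j + 2 ≤ n ∧ t = (l + n - 1) % (2 * n)) ∨
      inCyc (2 * n) t (l + 1) (l + n - 2))) ∨
  (i = n + 1 ∧ (j = n - 1 ∨ j = n) ∧ t = (l + n - 1) % (2 * n)) ∨
  (n + 2 ≤ i ∧ j + 1 = i ∧ t = (l + n - 1) % (2 * n))

instance (n l t i j : ℕ) : Decidable (Mcond n l t i j) := by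
  unfold Mcond; infer_instance

/-- The Markov matrix `M_n`, a `2n(2n-1) × 2n(2n-1)` `(0,1)`-matrix written as a
`2n × 2n` array of `(2n-1) × (2n-1)` blocks. -/
def Mmat (n : ℕ) :
    Matrix (Fin (2 * n) × Fin (2 * n - 1)) (Fin (2 * n) × Fin (2 * n - 1)) ℝ :=
  Matrix.of fun p q => if Mcond n p.1.val q.1.val p.2.val q.2.val then 1 else 0

/-- Entry `(i+1, j+1)` of the compacted matrix `C_n` of rank `n` (zero-indexed
`i, j ∈ {0, …, 2n-2}` corresponding to one-indexed indices in `{1, …, 2n-1}`). -/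
def Cfun (n i j : ℕ) : ℝ :=
  if i + 1 ≤ n - 3 ∧ j = i + 1 then 1
  else if i = n - 3 ∧ (j = n - 2 ∨ j = n - 1) then 1
  else if i = n - 2 ∧ j + 1 ≤ n then (n : ℝ) - 2
  else if i = n - 2 ∧ n ≤ j then (n : ℝ) - 1
  else if i = n - 1 then 1
  else if i = n ∧ j + 2 ≤ n then (n : ℝ) - 1
  else if i = n ∧ n - 1 ≤ j then (n : ℝ) - 2
  else if i = n + 1 ∧ (j = n - 1 ∨ j = n) then 1
  else if n + 2 ≤ i ∧ j + 1 = i then 1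
  else 0

/-- The compacted matrix `C_n` of rank `n`, of size `(2n-1) × (2n-1)`. -/
def Cmat (n : ℕ) : Matrix (Fin (2 * n - 1)) (Fin (2 * n - 1)) ℝ :=
  Matrix.of fun i j => Cfun n i.val j.val

/-- The `k × k` permutation matrix with ones on the anti-diagonal:
`(J_k)_{ij} = 1` iff `j = k + 1 - i` (one-indexed). -/
def Jmat (k : ℕ) : Matrix (Fin k) (Fin k) ℝ :=
  Matrix.of fun i j => if i.val + j.val + 1 = k then 1 else 0

/-- The `k × k` matrix `U^r_k` whose `r`-th row (one-indexed) consists of ones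
and whose other entries are `0`. -/
def Umat (k r : ℕ) : Matrix (Fin k) (Fin k) ℝ :=
  Matrix.of fun i _ => if i.val + 1 = r then 1 else 0

/-- The matrix `T_k` for `k = 2n - 1` (so that the middle index is `n`),
one-indexed: the `(i,j)` entry is `1` iff `j = i+1` and `1 ≤ i ≤ n-3`, or
`i = n-2` and `j ∈ {n-1, n}`, or `i = n-1` and `n+1 ≤ j ≤ k`. -/
def Tmat (n : ℕ) : Matrix (Fin (2 * n - 1)) (Fin (2 * n - 1)) ℝ :=
  Matrix.of fun i j =>
    if (j.val = i.val + 1 ∧ i.val + 1 ≤ n - 3) ∨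
       (i.val = n - 3 ∧ (j.val = n - 2 ∨ j.val = n - 1)) ∨
       (i.val = n - 2 ∧ n ≤ j.val) then 1 else 0

/-!
In the first block row of `M_n` (blocks numbered from 1), block `n+2` is `T_k`, block `n` is
`J_k T_k J_k` (rows `n+1, …, 2n-1` mirror rows `1, …, n-1`), block `1` is `U^n_k`, each of the
`n-2` blocks `n+3, …, 2n` is `U^{n-1}_k`, each of the `n-2` blocks `2, …, n-1` is `U^{n+1}_k`,
and block `n+1` vanishes. Summing the blocks therefore gives
`T_k + J_k T_k J_k + U^n_k + (n-2)(U^{n-1}_k + U^{n+1}_k)`, and this equals `C_n` row by row.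
-/

open Finset

theorem inCyc_iff_of_le {m t a b : ℕ} (hab : a ≤ b) (hb : b < m) (ht : t < m) :
    inCyc m t a b ↔ a ≤ t ∧ t ≤ b := by
  have hlen : (b + m - a) % m = b - a := by
    rw [show b + m - a = b - a + m by omega, Nat.add_mod_right, Nat.mod_eq_of_lt (by omega)]
  unfold inCyc
  rw [Nat.mod_eq_of_lt (hab.trans_lt hb), Nat.mod_eq_of_lt hb, hlen]
  rcases le_or_gt a t with hat | hta
  · rw [show t + m - a = t - a + m by omega, Nat.add_mod_right,
      Nat.mod_eq_of_lt (show t - a < m by omega)]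
    omega
  · rw [Nat.mod_eq_of_lt (show t + m - a < m by omega)]
    omega

theorem Mcond_zero_iff {n t i j : ℕ} (hn : 3 ≤ n) (ht : t < 2 * n) :
    Mcond n 0 t i j ↔
      (i + 1 ≤ n - 3 ∧ j = i + 1 ∧ t = n + 1) ∨
      (i = n - 3 ∧ (j = n - 2 ∨ j = n - 1) ∧ t = n + 1) ∨
      (i = n - 2 ∧ ((n ≤ j ∧ t = n + 1) ∨ n + 2 ≤ t)) ∨
      (i = n - 1 ∧ t = 0) ∨
      (i = n ∧ ((j + 2 ≤ n ∧ t = n - 1) ∨ (1 ≤ t ∧ t ≤ n - 2))) ∨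
      (i = n + 1 ∧ (j = n - 1 ∨ j = n) ∧ t = n - 1) ∨
      (n + 2 ≤ i ∧ j + 1 = i ∧ t = n - 1) := by
  have ht' : t ≤ 2 * n - 1 := by omega
  unfold Mcond
  simp only [zero_add]
  rw [inCyc_iff_of_le (by omega) (by omega) ht, inCyc_iff_of_le (by omega) (by omega) ht,
    Nat.mod_eq_of_lt (show n + 1 < 2 * n by omega),
    Nat.mod_eq_of_lt (show n - 1 < 2 * n by omega)]
  simp only [ht', and_true]

theorem Jmat_eq_toMatrix_revPerm (k : ℕ) :
    Jmat k = (Fin.revPerm : Equiv.Perm (Fin k)).toPEquiv.toMatrix := by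
  ext i j
  simp only [Jmat, Matrix.of_apply, PEquiv.toMatrix_apply, Equiv.toPEquiv_apply,
    Option.mem_def, Option.some.injEq, Fin.revPerm_apply, Fin.ext_iff, Fin.val_rev]
  congr 1
  apply propext
  omega

theorem Jmat_mul_mul_Jmat {k : ℕ} (M : Matrix (Fin k) (Fin k) ℝ) :
    Jmat k * M * Jmat k = M.submatrix Fin.rev Fin.rev := by
  rw [Jmat_eq_toMatrix_revPerm, PEquiv.toMatrix_toPEquiv_mul, PEquiv.mul_toMatrix_toPEquiv,
    Fin.revPerm_symm]
  rfl

theorem Fin.sum_univ_ite_val_mem {M : Type*} [AddCommMonoid M] {m : ℕ} {s : Finset ℕ}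
    (hs : s ⊆ range m) (A : M) :
    ∑ t : Fin m, (if (t : ℕ) ∈ s then A else 0) = #s • A := by
  rw [Fin.sum_univ_eq_sum_range (fun t => if t ∈ s then A else 0), sum_ite_mem,
    inter_eq_right.2 hs, Finset.sum_const]

theorem Fin.sum_univ_ite_val_eq {M : Type*} [AddCommMonoid M] {m a : ℕ} (ha : a < m) (A : M) :
    ∑ t : Fin m, (if (t : ℕ) = a then A else 0) = A := by
  simpa using sum_univ_ite_val_mem (s := {a}) (by simpa using ha) A

theorem Mmat_block_zero_eq {n : ℕ} (hn : 3 ≤ n) (t : Fin (2 * n)) :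
    (Mmat n).submatrix (Prod.mk ⟨0, by positivity⟩) (Prod.mk t) =
      (if (t : ℕ) = n + 1 then Tmat n else 0) +
      (if (t : ℕ) = n - 1 then (Tmat n).submatrix Fin.rev Fin.rev else 0) +
      (if (t : ℕ) = 0 then Umat (2 * n - 1) n else 0) +
      (if (t : ℕ) ∈ Ico (n + 2) (2 * n) then Umat (2 * n - 1) (n - 1) else 0) +
      (if (t : ℕ) ∈ Icc 1 (n - 2) then Umat (2 * n - 1) (n + 1) else 0) := by
  ext i j
  have hi := i.isLt
  have hj := j.isLt
  simp only [Matrix.submatrix_apply, Mmat, Matrix.of_apply, Matrix.add_apply, Matrix.ite_apply,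
    Matrix.zero_apply, Tmat, Umat, Fin.val_rev, Mcond_zero_iff hn t.isLt, mem_Ico, mem_Icc]
  grind (splits := 40)

theorem sum_Mmat_block_zero {n : ℕ} (hn : 3 ≤ n) :
    ∑ t : Fin (2 * n), (Mmat n).submatrix (Prod.mk ⟨0, by positivity⟩) (Prod.mk t) =
      Tmat n + (Tmat n).submatrix Fin.rev Fin.rev + Umat (2 * n - 1) n
        + ((n : ℝ) - 2) • (Umat (2 * n - 1) (n - 1) + Umat (2 * n - 1) (n + 1)) := by
  have hIco : Ico (n + 2) (2 * n) ⊆ range (2 * n) := fun t ht => by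
    simp only [mem_Ico, mem_range] at ht ⊢; omega
  have hIcc : Icc 1 (n - 2) ⊆ range (2 * n) := fun t ht => by
    simp only [mem_Icc, mem_range] at ht ⊢; omega
  have hcard : ((n - 2 : ℕ) : ℝ) = n - 2 := by rw [Nat.cast_sub (by omega)]; norm_num
  simp only [Mmat_block_zero_eq hn, sum_add_distrib,
    Fin.sum_univ_ite_val_eq (show n + 1 < 2 * n by omega),
    Fin.sum_univ_ite_val_eq (show n - 1 < 2 * n by omega),
    Fin.sum_univ_ite_val_eq (show 0 < 2 * n by omega),
    Fin.sum_univ_ite_val_mem hIco, Fin.sum_univ_ite_val_mem hIcc, Nat.card_Ico, Nat.card_Icc]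
  rw [show 2 * n - (n + 2) = n - 2 by omega, show n - 2 + 1 - 1 = n - 2 by omega,
    ← Nat.cast_smul_eq_nsmul ℝ, ← Nat.cast_smul_eq_nsmul ℝ, hcard, smul_add, add_assoc]

theorem Tmat_add_rev_add_Umat_eq_Cmat {n : ℕ} (hn : 3 ≤ n) :
    Tmat n + (Tmat n).submatrix Fin.rev Fin.rev + Umat (2 * n - 1) n
      + ((n : ℝ) - 2) • (Umat (2 * n - 1) (n - 1) + Umat (2 * n - 1) (n + 1)) = Cmat n := by
  ext i j
  have hi := i.isLt
  have hj := j.isLt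
  simp only [Matrix.add_apply, Matrix.smul_apply, Matrix.submatrix_apply, Tmat, Umat, Cmat, Cfun,
    Matrix.of_apply, Fin.val_rev, smul_eq_mul]
  grind (splits := 40)

theorem stmt5 (n : ℕ) (hn : 3 ≤ n) :
    (∀ i j : Fin (2 * n - 1),
      (∑ t : Fin (2 * n), Mmat n ((⟨0, by omega⟩ : Fin (2 * n)), i) (t, j))
        = Cmat n i j) ∧
    Tmat n + Jmat (2 * n - 1) * Tmat n * Jmat (2 * n - 1) + Umat (2 * n - 1) n
      + ((n : ℝ) - 2) • (Umat (2 * n - 1) (n - 1) + Umat (2 * n - 1) (n + 1))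
      = Cmat n := by
  have hC := Tmat_add_rev_add_Umat_eq_Cmat hn
  refine ⟨fun i j => ?_, by rwa [Jmat_mul_mul_Jmat]⟩
  rw [← hC, ← sum_Mmat_block_zero hn, Matrix.sum_apply]
  rfl
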